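/- Let C ⊆ ℝ² be a compact convex set with μ(C) > 0 and let w ∈ C. Suppose that every closed half-plane whose boundary line passes through w contains exactly half the area of C, i.e., for every unit vector u ∈ ℝ², μ(C ∩ {q : ⟪q − w, u⟫ ≥ 0}) = μ(C)/2. Then C is point symmetric about w: for every q ∈ ℝ², q ∈ C if and only if 2w − q ∈ C. -/

import Mathlib

/-!
Halving along every line through `w` forces, by inclusion–exclusion, each wedge
`C ∩ H u ∩ H v` with apex `w` to have the same area as the opposite wedge `C ∩ H (-u) ∩ H (-v)`,
that is, as the corresponding wedge of the reflection `C' = 2w - C`. It also puts `w` in the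
interior of `C`, since a supporting line at `w` would leave a half-plane of zero area.
If some `x ∈ C` were not in `C'`, there would be a ball in `C \ C'`. A wedge at `w` around this
ball, thin enough, meets `C'` only between `w` and the ball (convexity of `C'`), hence only inside
`C` (convexity of `C`); so it has more area in `C` than in `C'`. Thus `C ⊆ C'`, which is the
symmetry because the reflection is an involution.
-/

open MeasureTheory Metric Set Module
open scoped ENNReal RealInnerProductSpace EuclideanSpace

section HalfSpace

variable {E : Type*} [NormedAddCommGroup E] [InnerProductSpace ℝ E]

def halfSpace (w u : E) : Set E := {q | 0 ≤ ⟪q - w, u⟫}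

theorem isClosed_halfSpace (w u : E) : IsClosed (halfSpace w u) :=
  isClosed_le continuous_const (by fun_prop)

theorem halfSpace_smul_of_pos (w u : E) {c : ℝ} (hc : 0 < c) :
    halfSpace w (c • u) = halfSpace w u := by
  ext q
  simp only [halfSpace, mem_ofPred_eq, real_inner_smul_right]
  exact mul_nonneg_iff_of_pos_left hc

theorem preimage_two_smul_sub_halfSpace_neg (w u : E) :
    (fun q => (2 : ℝ) • w - q) ⁻¹' halfSpace w (-u) = halfSpace w u := by
  ext q
  simp only [halfSpace, mem_preimage, mem_ofPred_eq]
  rw [show (2 : ℝ) • w - q - w = -(q - w) by rw [two_smul]; abel, inner_neg_neg]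

theorem ball_add_subset_halfSpace {w v e : E} (hve : ⟪v, e⟫ = 0) (he : ‖e‖ ≤ ‖v‖)
    {τ ρ : ℝ} (hτ : 0 ≤ τ) (hρ : (1 + τ) * ρ ≤ τ * ‖v‖) :
    ball (w + v) ρ ⊆ halfSpace w (τ • v + e) := by
  intro q hq
  obtain ⟨h, hh, rfl⟩ : ∃ h, ‖h‖ < ρ ∧ q = w + v + h :=
    ⟨q - (w + v), by simpa [dist_eq_norm] using hq, by abel⟩
  have hhv : -(‖h‖ * ‖v‖) ≤ ⟪h, v⟫ := neg_le_of_abs_le (abs_real_inner_le_norm h v)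
  have hhe : -(‖h‖ * ‖v‖) ≤ ⟪h, e⟫ :=
    (neg_le_neg (mul_le_mul_of_nonneg_left he (norm_nonneg h))).trans
      (neg_le_of_abs_le (abs_real_inner_le_norm h e))
  have hq : w + v + h - w = v + h := by abel
  simp only [halfSpace, mem_ofPred_eq, hq, inner_add_left, inner_add_right, real_inner_smul_right,
    real_inner_self_eq_norm_sq, hve]
  have : (1 + τ) * ‖h‖ ≤ τ * ‖v‖ := by nlinarith
  nlinarith [mul_le_mul_of_nonneg_left this (norm_nonneg v), mul_le_mul_of_nonneg_left hhv hτ]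

/-- Points of `B` in the open cone with apex `w` over `ball p r` lie in `A`: a point of the cone
beyond the ball would put a point of the ball into `B` by convexity. -/
theorem mem_of_norm_smul_sub_smul_lt {A B : Set E} (hA : Convex ℝ A) (hB : Convex ℝ B)
    {w p y : E} {r s t : ℝ} (hwA : w ∈ A) (hwB : w ∈ B) (hball : ball p r ⊆ A \ B) (hy : y ∈ B)
    (hs : 0 < s) (ht : 0 < t) (h : ‖s • (y - w) - t • (p - w)‖ < t * r) : y ∈ A := by
  set q := w + (s / t) • (y - w)
  have hq : q ∈ ball p r := by
    rw [mem_ball, dist_eq_norm]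
    have : q - p = t⁻¹ • (s • (y - w) - t • (p - w)) := by
      simp only [q, smul_sub, smul_smul, div_eq_inv_mul, inv_mul_cancel₀ ht.ne', one_smul]
      abel
    rw [this, norm_smul, Real.norm_of_nonneg (inv_nonneg.2 ht.le), inv_mul_lt_iff₀ ht]
    exact h
  rcases le_or_gt t s with hts | hst
  · have : y = w + (t / s) • (q - w) := by
      simp only [q, add_sub_cancel_left, smul_smul, div_mul_div_cancel₀ hs.ne', div_self ht.ne',
        one_smul, add_sub_cancel]
    rw [this]
    exact hA.add_smul_sub_mem hwA (hball hq).1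
      ⟨by positivity, (div_le_one hs).2 hts⟩
  · exact absurd (hB.add_smul_sub_mem hwB hy ⟨by positivity, (div_le_one ht).2 hst.le⟩)
      (hball hq).2

end HalfSpace

section Plane

variable {E : Type*} [NormedAddCommGroup E] [InnerProductSpace ℝ E] [Fact (finrank ℝ E = 2)]

theorem Orientation.norm_sq_smul_sub_inner_smul (o : Orientation ℝ E (Fin 2)) (v z : E) :
    ‖‖v‖ ^ 2 • z - ⟪z, v⟫ • v‖ = ‖v‖ * |⟪z, o.rightAngleRotation v⟫| := by
  have key := o.inner_sq_add_areaForm_sq v z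
  rw [o.inner_rightAngleRotation_right, o.areaForm_swap, neg_neg]
  refine (sq_eq_sq₀ (norm_nonneg _) (by positivity)).1 ?_
  rw [norm_sub_sq_real, norm_smul, norm_smul, real_inner_smul_left, real_inner_smul_right]
  simp only [Real.norm_eq_abs, mul_pow, sq_abs, abs_pow]
  rw [real_inner_comm] at key
  linear_combination (-‖v‖ ^ 2) * key

theorem inter_halfSpace_inter_halfSpace_subset (o : Orientation ℝ E (Fin 2)) {A B : Set E}
    (hA : Convex ℝ A) (hB : Convex ℝ B) {w v : E} {r τ : ℝ} (hwA : w ∈ A) (hwB : w ∈ B)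
    (hball : ball (w + v) r ⊆ A \ B) (hτ : 0 < τ) (hτr : τ * ‖v‖ < r) :
    B ∩ (halfSpace w (τ • v + o.rightAngleRotation v) ∩
      halfSpace w (τ • v - o.rightAngleRotation v)) ⊆ A := by
  have hv : v ≠ 0 := by
    rintro rfl
    exact (hball (by simpa using hτr)).2 hwB
  rintro y ⟨hyB, hyu, hyv⟩
  simp only [halfSpace, mem_ofPred_eq, inner_add_right, inner_sub_right,
    real_inner_smul_right] at hyu hyv
  have hJ : |⟪y - w, o.rightAngleRotation v⟫| ≤ τ * ⟪y - w, v⟫ :=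
    abs_le.2 ⟨by linarith, by linarith⟩
  have hnorm := o.norm_sq_smul_sub_inner_smul v (y - w)
  rcases (nonneg_of_mul_nonneg_right ((abs_nonneg _).trans hJ) hτ).eq_or_lt with ha | ha
  · rw [← ha, mul_zero, abs_nonpos_iff] at hJ
    rw [hJ, abs_zero, mul_zero, ← ha, zero_smul, sub_zero, norm_eq_zero,
      smul_eq_zero_iff_right (pow_ne_zero 2 (norm_ne_zero_iff.2 hv)), sub_eq_zero] at hnorm
    exact hnorm ▸ hwA
  · refine mem_of_norm_smul_sub_smul_lt hA hB hwA hwB hball hyB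
      (pow_pos (norm_pos_iff.2 hv) 2) ha ?_
    rw [add_sub_cancel_left, hnorm]
    calc ‖v‖ * |⟪y - w, o.rightAngleRotation v⟫| ≤ ‖v‖ * (τ * ⟪y - w, v⟫) := by gcongr
      _ < ⟪y - w, v⟫ * r := by nlinarith

end Plane

theorem Convex.exists_ball_subset_diff {E : Type*} [NormedAddCommGroup E] [NormedSpace ℝ E]
    {A B : Set E} (hA : Convex ℝ A) (hint : (interior A).Nonempty) (hB : IsClosed B) {x : E}
    (hxA : x ∈ A) (hxB : x ∉ B) : ∃ p r, 0 < r ∧ ball p r ⊆ A \ B := by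
  have hx : x ∈ closure (interior A) := by
    rw [hA.closure_interior_eq_closure_of_nonempty_interior hint]
    exact subset_closure hxA
  obtain ⟨p, hpB, hpA⟩ := mem_closure_iff.1 hx _ hB.isOpen_compl hxB
  obtain ⟨r, hr, hball⟩ := Metric.isOpen_iff.1 (hB.isOpen_compl.inter isOpen_interior) p ⟨hpB, hpA⟩
  exact ⟨p, r, hr, fun y hy => ⟨interior_subset (hball hy).2, (hball hy).1⟩⟩

section Measure

variable {E : Type*} [NormedAddCommGroup E] [InnerProductSpace ℝ E] [FiniteDimensional ℝ E]
  [MeasurableSpace E] [BorelSpace E] (μ : Measure E) [μ.IsAddHaarMeasure]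

theorem measure_inner_sub_eq_zero (w : E) {u : E} (hu : u ≠ 0) : μ {q | ⟪q - w, u⟫ = 0} = 0 := by
  have hker : LinearMap.ker (innerₛₗ ℝ u) ≠ ⊤ := fun h => hu <| by
    simpa using (h ▸ Submodule.mem_top : u ∈ LinearMap.ker (innerₛₗ ℝ u))
  have hset : {q | ⟪q - w, u⟫ = 0} = (· + -w) ⁻¹' LinearMap.ker (innerₛₗ ℝ u) := by
    ext q
    simp [sub_eq_add_neg, real_inner_comm]
  rw [hset, measure_preimage_add_right, Measure.addHaar_submodule μ _ hker]

theorem measure_inter_halfSpace_add_inter_halfSpace_neg {S : Set E} (hS : MeasurableSet S) (w : E)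
    {u : E} (hu : u ≠ 0) : μ (S ∩ halfSpace w u) + μ (S ∩ halfSpace w (-u)) = μ S := by
  rw [← measure_union_add_inter _ (hS.inter (isClosed_halfSpace w (-u)).measurableSet),
    ← inter_union_distrib_left, ← inter_inter_distrib_left]
  have hcover : halfSpace w u ∪ halfSpace w (-u) = univ := by
    ext q
    simp only [halfSpace, inner_neg_right, mem_union, mem_ofPred_eq, mem_univ, iff_true,
      Left.nonneg_neg_iff]
    exact le_total _ _
  have hnull : μ (S ∩ (halfSpace w u ∩ halfSpace w (-u))) = 0 := by
    refine measure_mono_null (fun q ⟨_, hq, hq'⟩ => ?_) (measure_inner_sub_eq_zero μ w hu)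
    simp only [halfSpace, inner_neg_right, mem_ofPred_eq, Left.nonneg_neg_iff] at hq hq' ⊢
    exact le_antisymm hq' hq
  rw [hcover, inter_univ, hnull, add_zero]

theorem measure_inter_halfSpace_inter_halfSpace_eq_neg {C : Set E} (hC : MeasurableSet C)
    (hCfin : μ C ≠ ∞) {w : E} (hhalf : ∀ u ≠ 0, μ (C ∩ halfSpace w u) = μ C / 2)
    {u v : E} (hu : u ≠ 0) (hv : v ≠ 0) :
    μ (C ∩ halfSpace w u ∩ halfSpace w v) = μ (C ∩ halfSpace w (-u) ∩ halfSpace w (-v)) := by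
  have h1 := measure_inter_halfSpace_add_inter_halfSpace_neg μ
    (hC.inter (isClosed_halfSpace w u).measurableSet) w hv
  have h2 := measure_inter_halfSpace_add_inter_halfSpace_neg μ
    (hC.inter (isClosed_halfSpace w (-v)).measurableSet) w (neg_ne_zero.2 hu)
  rw [hhalf u hu] at h1
  rw [neg_neg, hhalf (-v) (neg_ne_zero.2 hv), inter_right_comm C (halfSpace w (-v)),
    inter_right_comm C (halfSpace w (-v))] at h2
  have hfin : μ (C ∩ halfSpace w u ∩ halfSpace w (-v)) ≠ ∞ :=
    measure_ne_top_of_subset (inter_subset_left.trans inter_subset_left) hCfin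
  exact (ENNReal.add_left_inj hfin).1 (h1.trans h2.symm)

theorem Convex.interior_nonempty_of_measure_ne_zero {C : Set E} (hC : Convex ℝ C)
    (h : μ C ≠ 0) : (interior C).Nonempty := by
  rw [nonempty_iff_ne_empty]
  intro hint
  refine h (measure_mono_null ?_ (hC.addHaar_frontier μ))
  rw [← closure_sdiff_interior, hint, sdiff_empty]
  exact subset_closure

theorem Convex.mem_interior_of_measure_inter_halfSpace_ne_zero {C : Set E} (hC : Convex ℝ C)
    (hint : (interior C).Nonempty) {w : E} (h : ∀ u ≠ 0, μ (C ∩ halfSpace w u) ≠ 0) :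
    w ∈ interior C := by
  by_contra hw
  obtain ⟨f, c, hf0, hfC, hfw⟩ := geometric_hahn_banach_of_nonempty_interior hC
    (convex_singleton w) (disjoint_singleton_right.2 hw) hint (singleton_nonempty w)
  set u := (InnerProductSpace.toDual ℝ E).symm f
  have hu : u ≠ 0 := by simpa [u] using hf0
  refine h u hu (measure_mono_null (fun q ⟨hqC, hq⟩ => le_antisymm ?_ hq)
    (measure_inner_sub_eq_zero μ w hu))
  have : ⟪q - w, u⟫ = f q - f w := by
    rw [inner_sub_left, real_inner_comm, real_inner_comm u, InnerProductSpace.toDual_symm_apply,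
      InnerProductSpace.toDual_symm_apply]
  linarith [hfC q hqC, hfw w rfl]

end Measure

section PlaneMeasure

variable {E : Type*} [NormedAddCommGroup E] [InnerProductSpace ℝ E] [Fact (finrank ℝ E = 2)]
  [MeasurableSpace E] [BorelSpace E] (μ : Measure E) [μ.IsAddHaarMeasure]

attribute [local instance] FiniteDimensional.of_fact_finrank_eq_two

theorem subset_of_measure_inter_halfSpace_inter_halfSpace_le {A B : Set E} (hA : Convex ℝ A)
    (hAb : Bornology.IsBounded A) (hB : Convex ℝ B) (hBc : IsClosed B) {w : E}
    (hwA : w ∈ interior A) (hwB : w ∈ B)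
    (hle : ∀ u v : E, u ≠ 0 → v ≠ 0 →
      μ (A ∩ halfSpace w u ∩ halfSpace w v) ≤ μ (B ∩ halfSpace w u ∩ halfSpace w v)) :
    A ⊆ B := by
  intro x hxA
  by_contra hxB
  obtain ⟨p, r, hr, hball⟩ := hA.exists_ball_subset_diff ⟨w, hwA⟩ hBc hxA hxB
  obtain ⟨v, rfl⟩ : ∃ v, p = w + v := ⟨p - w, (add_sub_cancel w p).symm⟩
  have hrv : r ≤ ‖v‖ := not_lt.1 fun h => (hball (by simpa using h)).2 hwB
  have hv : v ≠ 0 := norm_pos_iff.1 (hr.trans_le hrv)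
  let o : Orientation ℝ E (Fin 2) := (finBasisOfFinrankEq ℝ E Fact.out).orientation
  set J := o.rightAngleRotation
  have hvJ : ⟪v, J v⟫ = 0 := by simp [J]
  have hJ : ‖J v‖ = ‖v‖ := J.norm_map v
  have hne : ∀ s : ℝ, s • v + J v ≠ 0 ∧ s • v - J v ≠ 0 := fun s => by
    constructor <;> intro h <;> apply hv <;>
      simpa [J, inner_add_right, inner_sub_right, real_inner_smul_right] using
        congrArg (⟪J v, ·⟫) h
  -- `τ` makes the wedge `W` thin enough for `inter_halfSpace_inter_halfSpace_subset`, while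
  -- `ball (w + v) (r / 4)` still fits into it.
  set τ := r / (2 * ‖v‖)
  have hτ : 0 < τ := by positivity
  have hτv : τ * ‖v‖ = r / 2 := by simp only [τ]; field_simp
  set W := halfSpace w (τ • v + J v) ∩ halfSpace w (τ • v - J v)
  have hBW : B ∩ W ⊆ A :=
    inter_halfSpace_inter_halfSpace_subset o hA hB (interior_subset hwA) hwB hball hτ (by linarith)
  have hballW : ball (w + v) (r / 4) ⊆ W := by
    have hρ : (1 + τ) * (r / 4) ≤ τ * ‖v‖ := by
      rw [hτv]
      nlinarith [show τ ≤ 1 by rw [div_le_one (by positivity)]; linarith]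
    refine subset_inter (ball_add_subset_halfSpace hvJ hJ.le hτ.le hρ) ?_
    rw [sub_eq_add_neg]
    exact ball_add_subset_halfSpace (by rw [inner_neg_right, hvJ, neg_zero])
      (by rw [norm_neg, hJ]) hτ.le hρ
  have hdisj : Disjoint (B ∩ W) (ball (w + v) (r / 4)) :=
    disjoint_left.2 fun y hy hy' => (hball (ball_subset_ball (by linarith) hy')).2 hy.1
  have hfin : μ (B ∩ W) ≠ ∞ := (hAb.subset hBW).measure_lt_top.ne
  have hsum : μ (B ∩ W) + μ (ball (w + v) (r / 4)) ≤ μ (B ∩ W) + 0 := calc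
    _ = μ (B ∩ W ∪ ball (w + v) (r / 4)) := (measure_union hdisj measurableSet_ball).symm
    _ ≤ μ (A ∩ W) := measure_mono <| union_subset (subset_inter hBW inter_subset_right)
          (subset_inter (fun y hy => (hball (ball_subset_ball (by linarith) hy)).1) hballW)
    _ ≤ μ (B ∩ W) + 0 := by
          simpa only [W, inter_assoc, add_zero] using hle _ _ (hne τ).1 (hne τ).2
  exact (measure_ball_pos μ (w + v) (by positivity)).ne'
    (nonpos_iff_eq_zero.1 ((ENNReal.add_le_add_iff_left hfin).1 hsum))

end PlaneMeasure

theorem stmt_14 (C : Set (EuclideanSpace ℝ (Fin 2))) (hCc : IsCompact C)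
    (hCconv : Convex ℝ C) (hCvol : 0 < volume C)
    (w : EuclideanSpace ℝ (Fin 2))
    (hhalf : ∀ u : EuclideanSpace ℝ (Fin 2), ‖u‖ = 1 →
      volume (C ∩ {q | 0 ≤ ⟪q - w, u⟫}) = volume C / 2) :
    ∀ q, q ∈ C ↔ (2 : ℝ) • w - q ∈ C := by
  have hhalf' : ∀ u ≠ 0, volume (C ∩ halfSpace w u) = volume C / 2 := fun u hu => by
    rw [← halfSpace_smul_of_pos w u (inv_pos.2 (norm_pos_iff.2 hu))]
    exact hhalf _ (norm_smul_inv_norm hu)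
  have hwC : w ∈ interior C :=
    hCconv.mem_interior_of_measure_inter_halfSpace_ne_zero volume
      (hCconv.interior_nonempty_of_measure_ne_zero volume hCvol.ne') fun u hu => by
        simpa [hhalf' u hu] using hCvol.ne'
  set σ := fun q : EuclideanSpace ℝ (Fin 2) => (2 : ℝ) • w - q
  have hσ : ∀ q, σ (σ q) = q := fun q => sub_sub_cancel _ q
  have hsub : C ⊆ σ ⁻¹' C := by
    refine subset_of_measure_inter_halfSpace_inter_halfSpace_le volume hCconv hCc.isBounded
      ?_ (hCc.isClosed.preimage (by fun_prop)) hwC ?_ fun u v hu hv => ?_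
    · exact hCconv.affine_preimage (AffineMap.const ℝ _ ((2 : ℝ) • w) - AffineMap.id ℝ _)
    · simpa [σ, two_smul] using interior_subset hwC
    · rw [measure_inter_halfSpace_inter_halfSpace_eq_neg volume hCc.isClosed.measurableSet
        hCc.measure_lt_top.ne hhalf' hu hv, ← preimage_two_smul_sub_halfSpace_neg w u,
        ← preimage_two_smul_sub_halfSpace_neg w v]
      exact ((Measure.measurePreserving_sub_left volume _).measure_preimage
        (hCc.isClosed.measurableSet.inter (isClosed_halfSpace w _).measurableSet |>.inter
          (isClosed_halfSpace w _).measurableSet).nullMeasurableSet).ge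
  exact fun q => ⟨fun hq => hsub hq, fun hq => hσ q ▸ hsub hq⟩
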